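/- Let G be a finite graph, C a clique, v ∉ V(G), G⁺ = G_{C▷v}, and C_max ≠ C a maximal clique of G with C_max ∩ C ≠ ∅. Then the anchor family of C_max in G⁺ is A_{G⁺}(C_max) = A_G(C_max) ∪ {A ∩ (C_max ∩ C) : A ∈ A_G(C_max), A ∩ (C_max ∩ C) ≠ ∅}. -/

import Mathlib

open Polynomial Finset
open scoped Classical

variable {V : Type*}

/-- The periphery of a clique: vertices outside `C` adjacent to some vertex of `C`. -/
noncomputable def periphery [Fintype V] (G : SimpleGraph V) (C : Finset V) : Finset V :=
  univ.filter fun v => v ∉ C ∧ ∃ c ∈ C, G.Adj c v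

/-- The anchor set of a periphery set `M`: the common neighborhood of `M` inside `C`
(equal to `C` when `M = ∅`). -/
noncomputable def anchorSet (G : SimpleGraph V) (M C : Finset V) : Finset V :=
  C.filter fun c => ∀ w ∈ M, G.Adj w c

/-- The anchor family of a clique `C`: all nonempty subsets of `C` arising as anchor sets
of periphery sets. -/
noncomputable def anchorFamily [Fintype V] (G : SimpleGraph V) (C : Finset V) : Finset (Finset V) :=
  univ.filter fun A => A.Nonempty ∧ ∃ M ⊆ periphery G C, A = anchorSet G M C

/-- `C` is a maximal clique of `G`. -/
def IsMaxClique' (G : SimpleGraph V) (C : Finset V) : Prop :=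
  G.IsClique ↑C ∧ ∀ D : Finset V, G.IsClique ↑D → C ⊆ D → C = D
/-- The graph obtained by attaching a new vertex (`none`) to the vertex set `C` of `G`. -/
def attachVertex (G : SimpleGraph V) (C : Finset V) : SimpleGraph (Option V) where
  Adj x y := match x, y with
    | some a, some b => G.Adj a b
    | some a, none => a ∈ C
    | none, some b => b ∈ C
    | none, none => False
  symm := ⟨by rintro (_|a) (_|b) h <;> simp_all <;> exact h.symm⟩
  loopless := ⟨by rintro (_|a) h <;> simp_all⟩

lemma attach_adj_some_some (G : SimpleGraph V) (C : Finset V) (a b : V) :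
    (attachVertex G C).Adj (some a) (some b) ↔ G.Adj a b := Iff.rfl

lemma attach_adj_some_none (G : SimpleGraph V) (C : Finset V) (a : V) :
    (attachVertex G C).Adj (some a) none ↔ a ∈ C := Iff.rfl

lemma attach_adj_none_some (G : SimpleGraph V) (C : Finset V) (b : V) :
    (attachVertex G C).Adj none (some b) ↔ b ∈ C := Iff.rfl

lemma mem_anchorSet {G : SimpleGraph V} {M C : Finset V} {x : V} :
    x ∈ anchorSet G M C ↔ x ∈ C ∧ ∀ w ∈ M, G.Adj w x := by
  simp [anchorSet]

lemma mem_periphery [Fintype V] {G : SimpleGraph V} {C : Finset V} {x : V} :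
    x ∈ periphery G C ↔ x ∉ C ∧ ∃ c ∈ C, G.Adj c x := by
  simp [periphery]

lemma periphery_attach [Fintype V] (G : SimpleGraph V) (C Cmax : Finset V)
    (hint : (Cmax ∩ C).Nonempty) :
    periphery (attachVertex G C) (Cmax.image some) =
      insert none ((periphery G Cmax).image some) := by
  ext x
  cases x with
  | none =>
    obtain ⟨c, hc⟩ := hint
    rw [Finset.mem_inter] at hc
    refine iff_of_true (mem_periphery.2 ⟨by simp, some c,
      Finset.mem_image_of_mem some hc.1, ?_⟩) (Finset.mem_insert_self _ _)
    exact (attach_adj_some_none G C c).2 hc.2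
  | some w =>
    constructor
    · intro hx
      obtain ⟨hw, c', hc', hadj⟩ := mem_periphery.1 hx
      obtain ⟨c, hc, rfl⟩ := Finset.mem_image.1 hc'
      refine Finset.mem_insert_of_mem (Finset.mem_image_of_mem some
        (mem_periphery.2 ⟨?_, c, hc, hadj⟩))
      intro h; exact hw (Finset.mem_image_of_mem some h)
    · intro h
      rcases Finset.mem_insert.1 h with h | h
      · exact absurd h (by simp)
      · obtain ⟨w', hw', he⟩ := Finset.mem_image.1 h
        obtain rfl : w' = w := Option.some_injective V he
        obtain ⟨hw, c, hc, hadj⟩ := mem_periphery.1 hw'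
        refine mem_periphery.2 ⟨?_, some c, Finset.mem_image_of_mem some hc,
          (attach_adj_some_some G C c _).2 hadj⟩
        intro h'
        obtain ⟨a, ha, hae⟩ := Finset.mem_image.1 h'
        rw [Option.some_injective V hae] at ha
        exact hw ha

lemma anchorSet_attach_some (G : SimpleGraph V) (C Cmax M' : Finset V) :
    anchorSet (attachVertex G C) (M'.image some) (Cmax.image some) =
      (anchorSet G M' Cmax).image some := by
  ext x
  constructor
  · intro hx
    obtain ⟨hx1, hall⟩ := mem_anchorSet.1 hx
    obtain ⟨c, hc, rfl⟩ := Finset.mem_image.1 hx1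
    refine Finset.mem_image_of_mem some (mem_anchorSet.2 ⟨hc, fun w hw => ?_⟩)
    exact (attach_adj_some_some G C w c).1 (hall (some w) (Finset.mem_image_of_mem some hw))
  · intro hx
    obtain ⟨c, hc, rfl⟩ := Finset.mem_image.1 hx
    obtain ⟨hc1, hall⟩ := mem_anchorSet.1 hc
    refine mem_anchorSet.2 ⟨Finset.mem_image_of_mem some hc1, ?_⟩
    intro w hw
    obtain ⟨w', hw', rfl⟩ := Finset.mem_image.1 hw
    exact (attach_adj_some_some G C w' c).2 (hall w' hw')

lemma anchorSet_attach_none (G : SimpleGraph V) (C Cmax M' : Finset V) :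
    anchorSet (attachVertex G C) (insert none (M'.image some)) (Cmax.image some) =
      ((anchorSet G M' Cmax) ∩ (Cmax ∩ C)).image some := by
  ext x
  constructor
  · intro hx
    obtain ⟨hx1, hall⟩ := mem_anchorSet.1 hx
    obtain ⟨c, hc, rfl⟩ := Finset.mem_image.1 hx1
    refine Finset.mem_image_of_mem some ?_
    rw [Finset.mem_inter, Finset.mem_inter]
    refine ⟨mem_anchorSet.2 ⟨hc, fun w hw => (attach_adj_some_some G C w c).1
      (hall (some w) (Finset.mem_insert_of_mem (Finset.mem_image_of_mem some hw)))⟩, hc, ?_⟩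
    exact (attach_adj_none_some G C c).1 (hall none (Finset.mem_insert_self _ _))
  · intro hx
    obtain ⟨c, hc, rfl⟩ := Finset.mem_image.1 hx
    rw [Finset.mem_inter, Finset.mem_inter] at hc
    obtain ⟨hA, _, hcC⟩ := hc
    obtain ⟨hc1, hall⟩ := mem_anchorSet.1 hA
    refine mem_anchorSet.2 ⟨Finset.mem_image_of_mem some hc1, ?_⟩
    intro w hw
    rcases Finset.mem_insert.1 hw with rfl | hw
    · exact (attach_adj_none_some G C c).2 hcC
    · obtain ⟨w', hw', rfl⟩ := Finset.mem_image.1 hw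
      exact (attach_adj_some_some G C w' c).2 (hall w' hw')

lemma mem_anchorFamily [Fintype V] {G : SimpleGraph V} {C : Finset V} {A : Finset V} :
    A ∈ anchorFamily G C ↔ A.Nonempty ∧ ∃ M ⊆ periphery G C, A = anchorSet G M C := by
  simp [anchorFamily]

/-- after attaching a vertex to a clique `C`, the anchor family of a maximal
clique `C_max ≠ C` meeting `C` is
`A_G(C_max) ∪ {A ∩ (C_max ∩ C) : A ∈ A_G(C_max), A ∩ (C_max ∩ C) ≠ ∅}`
(transported to the new vertex type via `some`). -/
theorem anchorFamily_attach_update [Fintype V] (G : SimpleGraph V) (C Cmax : Finset V)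
    (hC : G.IsClique ↑C) (hmax : IsMaxClique' G Cmax) (hne : Cmax ≠ C)
    (hint : (Cmax ∩ C).Nonempty) :
    anchorFamily (attachVertex G C) (Cmax.image some) =
      (anchorFamily G Cmax ∪
        ((anchorFamily G Cmax).image (fun A => A ∩ (Cmax ∩ C))).filter
          Finset.Nonempty).image (Finset.image some) := by
  have hinj : ∀ (M : Finset (Option V)), Set.InjOn some (some ⁻¹' ↑M) :=
    fun M a _ b _ h => Option.some_injective V h
  ext A
  rw [mem_anchorFamily, Finset.mem_image]
  constructor
  · rintro ⟨hAne, M, hMsub, rfl⟩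
    rw [periphery_attach G C Cmax hint] at hMsub
    set M' : Finset V := M.preimage some (hinj M) with hM'def
    have hM'sub : M' ⊆ periphery G Cmax := by
      intro w hw
      have hwM : some w ∈ M := Finset.mem_preimage.1 hw
      rcases Finset.mem_insert.1 (hMsub hwM) with h | h
      · exact absurd h (by simp)
      · obtain ⟨w'', hw'', he⟩ := Finset.mem_image.1 h
        rwa [Option.some_injective V he] at hw''
    by_cases hn : (none : Option V) ∈ M
    · have hMeq : M = insert none (M'.image some) := by
        ext x
        constructor
        · intro hx
          rcases Finset.mem_insert.1 (hMsub hx) with h | h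
          · exact h ▸ Finset.mem_insert_self _ _
          · obtain ⟨w, _, rfl⟩ := Finset.mem_image.1 h
            exact Finset.mem_insert_of_mem
              (Finset.mem_image_of_mem some (Finset.mem_preimage.2 hx))
        · intro hx
          rcases Finset.mem_insert.1 hx with rfl | hx
          · exact hn
          · obtain ⟨w, hw, rfl⟩ := Finset.mem_image.1 hx
            exact Finset.mem_preimage.1 hw
      rw [hMeq, anchorSet_attach_none] at hAne ⊢
      have hBne : ((anchorSet G M' Cmax) ∩ (Cmax ∩ C)).Nonempty :=
        Finset.image_nonempty.1 hAne
      refine ⟨(anchorSet G M' Cmax) ∩ (Cmax ∩ C), Finset.mem_union_right _ ?_, rfl⟩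
      refine Finset.mem_filter.2 ⟨Finset.mem_image.2 ⟨anchorSet G M' Cmax, ?_, rfl⟩, hBne⟩
      exact mem_anchorFamily.2 ⟨hBne.mono Finset.inter_subset_left, M', hM'sub, rfl⟩
    · have hMeq : M = M'.image some := by
        ext x
        constructor
        · intro hx
          rcases Finset.mem_insert.1 (hMsub hx) with h | h
          · exact absurd (h ▸ hx) hn
          · obtain ⟨w, _, rfl⟩ := Finset.mem_image.1 h
            exact Finset.mem_image_of_mem some (Finset.mem_preimage.2 hx)
        · intro hx
          obtain ⟨w, hw, rfl⟩ := Finset.mem_image.1 hx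
          exact Finset.mem_preimage.1 hw
      rw [hMeq, anchorSet_attach_some] at hAne ⊢
      refine ⟨anchorSet G M' Cmax, Finset.mem_union_left _ ?_, rfl⟩
      exact mem_anchorFamily.2 ⟨Finset.image_nonempty.1 hAne, M', hM'sub, rfl⟩
  · rintro ⟨B, hB, rfl⟩
    rcases Finset.mem_union.1 hB with hB | hB
    · obtain ⟨hBne, M', hM', rfl⟩ := mem_anchorFamily.1 hB
      refine ⟨Finset.image_nonempty.2 hBne, M'.image some, ?_,
        (anchorSet_attach_some G C Cmax M').symm⟩
      rw [periphery_attach G C Cmax hint]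
      exact Finset.Subset.trans (Finset.image_subset_image hM')
        (Finset.subset_insert _ _)
    · obtain ⟨hB1, hBne⟩ := Finset.mem_filter.1 hB
      obtain ⟨A₀, hA₀, rfl⟩ := Finset.mem_image.1 hB1
      obtain ⟨hA₀ne, M', hM', rfl⟩ := mem_anchorFamily.1 hA₀
      refine ⟨Finset.image_nonempty.2 hBne, insert none (M'.image some), ?_,
        (anchorSet_attach_none G C Cmax M').symm⟩
      rw [periphery_attach G C Cmax hint]
      exact Finset.insert_subset_insert _ (Finset.image_subset_image hM')
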